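/- Let M, a ∈ ℝ and m ∈ ℤ. Then the function A_m satisfies the second-order ODE identity Δ(r)·A_m''(r) + 2·(i·a·m − (r−M))·A_m'(r) − 4·A_m(r) = 0 for every r ∈ ℝ. -/

import Mathlib

noncomputable section

/-- `Δ(r) = r² − 2Mr + a²`. -/
def Δk (M a r : ℝ) : ℝ := r^2 - 2*M*r + a^2

/-- The polynomial `A_m(r)` governing the leading-order asymptotics of the spin `+2`
Teukolsky field. -/
def Am (M a : ℝ) (m : ℤ) (r : ℝ) : ℂ :=
  (1/3 : ℂ) * (3 * ((Δk M a r : ℝ) : ℂ)^2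
    + Complex.I * (a : ℂ) * (m : ℂ) * ((r : ℂ) - (M : ℂ)) *
        (4 * ((a : ℂ)^2 - (M : ℂ)^2) + 6 * ((Δk M a r : ℝ) : ℂ))
    - (a : ℂ)^2 * (m : ℂ)^2 *
        (2 * ((Δk M a r : ℝ) : ℂ) + 6 * ((a : ℂ)^2 - (M : ℂ)^2)
          + 4 * ((r : ℂ) - (M : ℂ))^2)
    - 4 * Complex.I * (a : ℂ)^3 * (m : ℂ)^3 * ((r : ℂ) - (M : ℂ))
    + 2 * (a : ℂ)^4 * (m : ℂ)^4)

open Polynomial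

theorem Polynomial.deriv_eval_ofReal (p : ℂ[X]) :
    deriv (fun r : ℝ => p.eval (r : ℂ)) = fun r : ℝ => p.derivative.eval (r : ℂ) := by
  funext r
  exact (p.hasDerivAt (r : ℂ)).comp_ofReal.deriv

/-- `A_m` written through `J = iam` (so `−a²m² = J²`, `−ia³m³ = J³`, `a⁴m⁴ = J⁴`) and `b = a² − M²`
(so `Δ = (r − M)² + b`); the ODE then holds for arbitrary complex `M`, `b`, `J`. -/
def amPoly (M b J : ℂ) : ℂ[X] :=
  C (1 / 3) * (3 * ((X - C M) ^ 2 + C b) ^ 2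
    + C J * (X - C M) * (4 * C b + 6 * ((X - C M) ^ 2 + C b))
    + C J ^ 2 * (2 * ((X - C M) ^ 2 + C b) + 6 * C b + 4 * (X - C M) ^ 2)
    + 4 * C J ^ 3 * (X - C M) + 2 * C J ^ 4)

theorem amPoly_ode (M b J z : ℂ) :
    ((z - M) ^ 2 + b) * (amPoly M b J).derivative.derivative.eval z
      + 2 * (J - (z - M)) * (amPoly M b J).derivative.eval z - 4 * (amPoly M b J).eval z = 0 := by
  simp only [amPoly, one_div, derivative_mul, derivative_C, zero_mul, derivative_add, derivative_ofNat,
    derivative_pow, Nat.cast_ofNat, Nat.add_one_sub_one, pow_one, derivative_sub, derivative_X, sub_zero,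
    mul_one, add_zero, zero_add, mul_zero, eval_mul, eval_C, eval_add, eval_ofNat, eval_sub, eval_X, eval_pow]
  ring

theorem Am_eq_eval_amPoly (M a : ℝ) (m : ℤ) :
    Am M a m = fun r : ℝ => (amPoly M (a ^ 2 - M ^ 2) (Complex.I * a * m)).eval (r : ℂ) := by
  funext r
  simp only [Am, Δk, amPoly, eval_add, eval_mul, eval_pow, eval_sub, eval_X, eval_C, eval_ofNat]
  push_cast
  ring_nf
  simp only [Complex.I_sq, Complex.I_pow_three, Complex.I_pow_four]
  ring

/-- **`A_m` satisfies the ODE `Δ·A_m'' + 2(iam − (r−M))·A_m' − 4·A_m = 0`.** -/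
theorem stmt_13 (M a : ℝ) (m : ℤ) :
    ∀ r : ℝ,
      ((Δk M a r : ℝ) : ℂ) * deriv (deriv (Am M a m)) r
        + 2 * (Complex.I * (a : ℂ) * (m : ℂ) - ((r : ℂ) - (M : ℂ))) * deriv (Am M a m) r
        - 4 * Am M a m r = 0 := by
  intro r
  have hΔ : ((Δk M a r : ℝ) : ℂ) = ((r : ℂ) - M) ^ 2 + (a ^ 2 - M ^ 2) := by
    simp only [Δk]
    push_cast
    ring
  rw [Am_eq_eval_amPoly, Polynomial.deriv_eval_ofReal, Polynomial.deriv_eval_ofReal, hΔ]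
  exact amPoly_ode M (a ^ 2 - M ^ 2) (Complex.I * a * m) r
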